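/- Let M be a fuzzy metric on X satisfying the finite distance condition, and let d_M(x,y) = sup_{λ∈(0,1)} inf{t : M(x,y,t) > λ}. Then for every x₀ ∈ X, r₀ > 0, and ε₀ ∈ (0,1), the d_M-open ball B(x₀,r₀) = {y : d_M(x₀,y) < r₀} is contained in the fuzzy open ball B(x₀,r₀,ε₀) = {y : M(x₀,y,r₀) > 1−ε₀}. Consequently, the topology induced by d_M is finer than the topology generated by the fuzzy open balls of M. -/

import Mathlib

open Filter Set Topology

structure IsFuzzyMetric {X : Type*} (M : X → X → ℝ → ℝ) : Prop where
  mem_Icc : ∀ x y t, M x y t ∈ Set.Icc (0:ℝ) 1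
  km1 : ∀ x y : X, ∀ t : ℝ, t ≤ 0 → M x y t = 0
  km2 : ∀ x y : X, (∀ t : ℝ, 0 < t → M x y t = 1) ↔ x = y
  km3 : ∀ x y t, M x y t = M y x t
  km4 : ∀ x y z : X, ∀ t s : ℝ, min (M x y t) (M y z s) ≤ M x z (t + s)
  km5_left_cont : ∀ x y : X, x ≠ y → ∀ t : ℝ,
    Filter.Tendsto (M x y) (nhdsWithin t (Set.Iio t)) (nhds (M x y t))
  km5_lim : ∀ x y : X, x ≠ y → Filter.Tendsto (M x y) Filter.atTop (nhds 1)
  sdp : ∀ x y : X, x ≠ y →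
    Filter.Tendsto (M x y) (nhdsWithin 0 (Set.Ioi 0)) (nhds 0)

noncomputable def Delta {X : Type*} (M : X → X → ℝ → ℝ) (lam : ℝ) (x y : X) : ℝ :=
  sInf {t : ℝ | lam < M x y t}

noncomputable def delta {X : Type*} (M : X → X → ℝ → ℝ) (lam : ℝ) (x y : X) : ℝ :=
  sSup {t : ℝ | M x y t < lam}

noncomputable def dM {X : Type*} (M : X → X → ℝ → ℝ) (x y : X) : ℝ :=
  sSup ((fun lam => Delta M lam x y) '' Set.Ioo (0:ℝ) 1)
/-!
Since `M x y` is bounded below by `0` and reaches `1` (condition FD), every `Delta M λ x y` with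
`λ ∈ (0, 1)` is a genuine infimum bounded by `dM M x y`. Hence `dM M x y < r` yields `s < r` with
`λ < M x y s`, and monotonicity of `M x y` gives `λ < M x y r`; with `λ = 1 - ε` this is the ball
inclusion. For the topologies: a point `y₀` of the fuzzy ball `{y | λ < M x y r}` already satisfies
`λ < M x y₀ t` for some `t < r` (left continuity, or `M x x t = 1`), and then by KM4 the whole
`dM`-ball of radius `r - t` around `y₀` lies in the fuzzy ball.
-/

abbrev dMTopology {X : Type*} (M : X → X → ℝ → ℝ) : TopologicalSpace X :=
  TopologicalSpace.generateFrom {s | ∃ (x : X) (r : ℝ), 0 < r ∧ s = {y | dM M x y < r}}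

namespace IsFuzzyMetric

variable {X : Type*} {M : X → X → ℝ → ℝ}

lemma apply_self (hM : IsFuzzyMetric M) (x : X) {t : ℝ} (ht : 0 < t) : M x x t = 1 :=
  (hM.km2 x x).mpr rfl t ht

lemma lt_apply_add (hM : IsFuzzyMetric M) {x y z : X} {lam t s : ℝ}
    (hxy : lam < M x y t) (hyz : lam < M y z s) : lam < M x z (t + s) :=
  (lt_min hxy hyz).trans_le (hM.km4 x y z t s)

lemma apply_mono (hM : IsFuzzyMetric M) (x y : X) : Monotone (M x y) := by
  intro t s hts
  rcases le_or_gt t 0 with ht | ht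
  · rw [hM.km1 x y t ht]
    exact (hM.mem_Icc x y s).1
  rcases hts.eq_or_lt with rfl | hts
  · exact le_rfl
  calc M x y t = min (M x x (s - t)) (M x y t) := by
        rw [hM.apply_self x (sub_pos.2 hts), min_eq_right (hM.mem_Icc x y t).2]
    _ ≤ M x y (s - t + t) := hM.km4 x x y (s - t) t
    _ = M x y s := by rw [sub_add_cancel]

lemma exists_lt_lt_apply (hM : IsFuzzyMetric M) {x y : X} {lam r : ℝ} (hr : 0 < r)
    (h : lam < M x y r) : ∃ t < r, lam < M x y t := by
  by_cases hxy : x = y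
  · subst hxy
    refine ⟨r / 2, half_lt_self hr, ?_⟩
    rw [hM.apply_self x hr] at h
    rwa [hM.apply_self x (half_pos hr)]
  · have hev : ∀ᶠ t in 𝓝[<] r, lam < M x y t := hM.km5_left_cont x y hxy r (Ioi_mem_nhds h)
    obtain ⟨t, hlam, htr⟩ := (hev.and self_mem_nhdsWithin).exists
    exact ⟨t, htr, hlam⟩

lemma pos_of_lt_apply (hM : IsFuzzyMetric M) {x y : X} {lam t : ℝ} (hlam : 0 ≤ lam)
    (h : lam < M x y t) : 0 < t := by
  refine lt_of_not_ge fun ht => ?_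
  rw [hM.km1 x y t ht] at h
  exact h.not_ge hlam

lemma bddBelow_setOf_lt_apply (hM : IsFuzzyMetric M) (x y : X) {lam : ℝ} (hlam : 0 ≤ lam) :
    BddBelow {t | lam < M x y t} :=
  ⟨0, fun _ ht => (hM.pos_of_lt_apply hlam ht).le⟩

lemma Delta_le_dM (hM : IsFuzzyMetric M) (hFD : ∀ x y : X, ∃ t : ℝ, M x y t = 1) (x y : X)
    {lam : ℝ} (hlam : lam ∈ Ioo (0 : ℝ) 1) : Delta M lam x y ≤ dM M x y := by
  obtain ⟨t₀, ht₀⟩ := hFD x y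
  have hmem : ∀ l < 1, t₀ ∈ {t | l < M x y t} := fun l hl => by simpa [ht₀] using hl
  refine le_csSup ⟨t₀, ?_⟩ ⟨lam, hlam, rfl⟩
  rintro _ ⟨l, hl, rfl⟩
  exact csInf_le (hM.bddBelow_setOf_lt_apply x y hl.1.le) (hmem l hl.2)

lemma lt_apply_of_dM_lt (hM : IsFuzzyMetric M) (hFD : ∀ x y : X, ∃ t : ℝ, M x y t = 1)
    {x y : X} {lam r : ℝ} (hlam : lam ∈ Ioo (0 : ℝ) 1) (h : dM M x y < r) :
    lam < M x y r := by
  obtain ⟨t₀, ht₀⟩ := hFD x y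
  have hne : {t | lam < M x y t}.Nonempty := ⟨t₀, by simpa [ht₀] using hlam.2⟩
  obtain ⟨s, hs, hsr⟩ := exists_lt_of_csInf_lt hne ((hM.Delta_le_dM hFD x y hlam).trans_lt h)
  exact hs.trans_le (hM.apply_mono x y hsr.le)

lemma dM_self (hM : IsFuzzyMetric M) (x : X) : dM M x x = 0 := by
  have hDelta : EqOn (fun lam => Delta M lam x x) (fun _ => 0) (Ioo (0 : ℝ) 1) := by
    intro lam hlam
    have hset : {t | lam < M x x t} = Ioi 0 := by
      ext t
      refine ⟨hM.pos_of_lt_apply hlam.1.le, fun ht => ?_⟩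
      simpa [hM.apply_self x ht] using hlam.2
    simp only [Delta, hset, csInf_Ioi]
  rw [dM, image_congr hDelta, Nonempty.image_const ⟨1 / 2, by norm_num⟩, csSup_singleton]

lemma isOpen_setOf_lt_apply (hM : IsFuzzyMetric M) (hFD : ∀ x y : X, ∃ t : ℝ, M x y t = 1)
    (x : X) {lam r : ℝ} (hlam : lam ∈ Ioo (0 : ℝ) 1) (hr : 0 < r) :
    IsOpen[dMTopology M] {y | lam < M x y r} := by
  refine (@isOpen_iff_forall_mem_open X (dMTopology M) _).2 fun y₀ hy₀ => ?_
  obtain ⟨t, htr, ht⟩ := hM.exists_lt_lt_apply hr hy₀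
  have hrt : 0 < r - t := sub_pos.2 htr
  refine ⟨{y | dM M y₀ y < r - t}, fun y hy => ?_,
    TopologicalSpace.isOpen_generateFrom_of_mem ⟨y₀, r - t, hrt, rfl⟩, ?_⟩
  · simpa using hM.lt_apply_add ht (hM.lt_apply_of_dM_lt hFD hlam hy)
  · simpa [hM.dM_self] using hrt

end IsFuzzyMetric

theorem dM_ball_subset_fuzzyBall_general {X : Type*} (M : X → X → ℝ → ℝ)
    (hM : IsFuzzyMetric M) (hFD : ∀ x y : X, ∃ t : ℝ, M x y t = 1)
    (x₀ : X) (r₀ : ℝ) (ε₀ : ℝ) (hε₀ : ε₀ ∈ Set.Ioo (0:ℝ) 1) :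
    {y : X | dM M x₀ y < r₀} ⊆ {y : X | 1 - ε₀ < M x₀ y r₀} ∧
    TopologicalSpace.generateFrom
        {s : Set X | ∃ (x : X) (r : ℝ), 0 < r ∧ s = {y : X | dM M x y < r}} ≤
      TopologicalSpace.generateFrom
        {s : Set X | ∃ (x : X) (r ε : ℝ), 0 < r ∧ ε ∈ Set.Ioo (0:ℝ) 1 ∧
          s = {y : X | 1 - ε < M x y r}} := by
  have one_sub_mem : ∀ ε ∈ Ioo (0 : ℝ) 1, 1 - ε ∈ Ioo (0 : ℝ) 1 :=
    fun ε hε => ⟨sub_pos.2 hε.2, sub_lt_self 1 hε.1⟩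
  refine ⟨fun y hy => hM.lt_apply_of_dM_lt hFD (one_sub_mem ε₀ hε₀) hy, le_generateFrom ?_⟩
  rintro s ⟨x, r, ε, hr, hε, rfl⟩
  exact hM.isOpen_setOf_lt_apply hFD x (one_sub_mem ε hε) hr

theorem dM_ball_subset_fuzzyBall {X : Type*} (M : X → X → ℝ → ℝ)
    (hM : IsFuzzyMetric M) (hFD : ∀ x y : X, ∃ t : ℝ, M x y t = 1)
    (x₀ : X) (r₀ : ℝ) (hr₀ : 0 < r₀) (ε₀ : ℝ) (hε₀ : ε₀ ∈ Set.Ioo (0:ℝ) 1) :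
    {y : X | dM M x₀ y < r₀} ⊆ {y : X | 1 - ε₀ < M x₀ y r₀} ∧
    TopologicalSpace.generateFrom
        {s : Set X | ∃ (x : X) (r : ℝ), 0 < r ∧ s = {y : X | dM M x y < r}} ≤
      TopologicalSpace.generateFrom
        {s : Set X | ∃ (x : X) (r ε : ℝ), 0 < r ∧ ε ∈ Set.Ioo (0:ℝ) 1 ∧
          s = {y : X | 1 - ε < M x y r}} :=
  dM_ball_subset_fuzzyBall_general M hM hFD x₀ r₀ ε₀ hε₀
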